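/- Let q be a prime power, 0 < ε ≤ 1, and let c' : 𝔽_q^k → 𝔽_q^{n'} be an injective map with d(c'(x), c'(y)) ≥ 1 − ε² for all distinct x, y ∈ 𝔽_q^k. Let L be an integer with 1/ε ≤ L ≤ q^k, let n ≥ 1, and let c be a randomly sampled version of c' of block length n. Then for every subset Λ ⊆ 𝔽_q^k with |Λ| = L: 𝔼[ max over z ∈ 𝔽_q^n of Σ_{x∈Λ} agr(c(x), z) ] ≤ 2·n·L·ε, where the expectation is over the random sampling. -/

import Mathlib

/-!
For a fixed sampling `s`, write `S` for the maximal total agreement of the sampled words of `Λ`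
with a centre `z`, and `P` for the sum of their pairwise agreements. Counting, coordinate by
coordinate, how many words agree with `z` and applying Cauchy–Schwarz gives the average-radius
Johnson bound `S² ≤ n (S + P)`. Averaging over `s`, Jensen gives `(𝔼 S)² ≤ n 𝔼 S + n 𝔼 P`, and
since a uniformly random coordinate sees the agreement of two codewords with probability
`1 - d ≤ ε²`, we get `𝔼 P ≤ n L² ε²`. With `n ≤ n L ε` the quadratic inequality forces
`𝔼 S ≤ 2 n L ε`.
-/

open Finset

noncomputable section

/-- `agr u v` is the number of coordinates on which `u` and `v` agree. -/
def agr {F : Type} [DecidableEq F] {n : ℕ} (u v : Fin n → F) : ℕ :=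
  (Finset.univ.filter (fun j => u j = v j)).card

/-- `rdist u v` is the relative Hamming distance between `u` and `v`. -/
def rdist {F : Type} [DecidableEq F] {n : ℕ} (u v : Fin n → F) : ℝ :=
  ((Finset.univ.filter (fun j => u j ≠ v j)).card : ℝ) / n

open scoped BigOperators

lemma Fintype.sum_comp_eval {ι α M : Type*} [Fintype ι] [DecidableEq ι] [Fintype α]
    [DecidableEq α] [AddCommMonoid M] (g : α → M) (j : ι) :
    ∑ s : ι → α, g (s j) = Fintype.card α ^ (Fintype.card ι - 1) • ∑ a, g a := by
  rw [← Finset.sum_fiberwise' univ (fun s : ι → α => s j) g, Finset.smul_sum]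
  refine Finset.sum_congr rfl fun a _ => ?_
  rw [Finset.sum_const]
  congr 1
  simpa using Fintype.card_filter_piFinset_const_eq_of_mem (univ : Finset α) j (mem_univ a)

lemma card_filter_eq_sq_le {ι α : Type*} [DecidableEq ι] [DecidableEq α] (Λ : Finset ι)
    (f : ι → α) (a : α) :
    #{x ∈ Λ | f x = a} ^ 2 ≤ #{x ∈ Λ | f x = a} + ∑ x ∈ Λ, #{y ∈ Λ.erase x | f y = f x} := by
  set A := {x ∈ Λ | f x = a}
  have hsub : ∀ x ∈ A, A.erase x ⊆ {y ∈ Λ.erase x | f y = f x} := by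
    intro x hx y hy
    obtain ⟨hyx, hyA⟩ := mem_erase.1 hy
    rw [mem_filter] at hx hyA ⊢
    exact ⟨mem_erase.2 ⟨hyx, hyA.1⟩, hyA.2.trans hx.2.symm⟩
  calc #A ^ 2 = ∑ x ∈ A, (1 + #(A.erase x)) := by
        rw [sq, ← smul_eq_mul, ← sum_const]
        exact sum_congr rfl fun x hx => by rw [add_comm, card_erase_add_one hx]
    _ ≤ ∑ x ∈ A, (1 + #{y ∈ Λ.erase x | f y = f x}) :=
        sum_le_sum fun x hx => by gcongr; exact hsub x hx
    _ ≤ #A + ∑ x ∈ Λ, #{y ∈ Λ.erase x | f y = f x} := by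
        rw [sum_add_distrib, card_eq_sum_ones A]
        gcongr
        exact filter_subset _ _

lemma sq_ciSup_le_of_forall {ι : Type*} [Finite ι] {f : ι → ℝ} {a b : ℝ} (hb : 0 ≤ b)
    (h : ∀ i, f i ^ 2 ≤ a * f i + b) : (⨆ i, f i) ^ 2 ≤ a * (⨆ i, f i) + b := by
  cases isEmpty_or_nonempty ι
  · simpa using hb
  obtain ⟨i, hi⟩ := exists_eq_ciSup_of_finite (f := f)
  rw [← hi]
  exact h i

lemma Finset.sq_expect_le_expect_sq {ι : Type*} (s : Finset ι) (f : ι → ℝ) :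
    (𝔼 i ∈ s, f i) ^ 2 ≤ 𝔼 i ∈ s, f i ^ 2 := by
  rcases s.eq_empty_or_nonempty with rfl | hs
  · simp
  simpa [expect_const hs] using expect_mul_sq_le_sq_mul_sq s f 1

lemma le_two_mul_of_sq_le_mul_add_sq {M a b : ℝ} (ha : 0 ≤ a) (hab : a ≤ b)
    (h : M ^ 2 ≤ a * M + b ^ 2) : M ≤ 2 * b := by
  nlinarith

section Codes

variable {ι : Type*} {F : Type} [DecidableEq F] {n n' : ℕ}

lemma agr_add_card_filter_ne (u v : Fin n → F) : agr u v + #{j | u j ≠ v j} = n := by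
  rw [agr, card_filter_add_card_filter_not, card_univ, Fintype.card_fin]

lemma agr_eq_mul_one_sub_rdist (u v : Fin n → F) : (agr u v : ℝ) = n * (1 - rdist u v) := by
  rcases Nat.eq_zero_or_pos n with rfl | hn
  · simp [agr]
  have h : (agr u v : ℝ) + #{j | u j ≠ v j} = n := by exact_mod_cast agr_add_card_filter_ne u v
  rw [rdist, mul_one_sub, mul_div_cancel₀ _ (by positivity)]
  linarith

lemma agr_eq_sum_ite (u v : Fin n → F) : agr u v = ∑ j, if u j = v j then 1 else 0 :=
  card_filter _ _

lemma sum_agr_comp (u v : Fin n' → F) :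
    ∑ s : Fin n → Fin n', agr (fun j => u (s j)) (fun j => v (s j))
      = n * n' ^ (n - 1) * agr u v := by
  simp only [agr_eq_sum_ite]
  rw [sum_comm]
  simp only [Fintype.sum_comp_eval (fun i => if u i = v i then 1 else 0), Fintype.card_fin,
    smul_eq_mul, sum_const, card_univ, mul_assoc]

lemma expect_agr_comp (hn' : 0 < n') (u v : Fin n' → F) :
    𝔼 s : Fin n → Fin n', (agr (fun j => u (s j)) (fun j => v (s j)) : ℝ)
      = n * (1 - rdist u v) := by
  rw [Fintype.expect_eq_sum_div_card, ← Nat.cast_sum, sum_agr_comp, Fintype.card_fun,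
    Fintype.card_fin, Fintype.card_fin]
  rcases n with _ | m
  · simp
  push_cast
  rw [agr_eq_mul_one_sub_rdist, pow_succ]
  field_simp

lemma expect_sum_agr_pairs_le [DecidableEq ι] (hn' : 0 < n') {Λ : Finset ι}
    {w : ι → Fin n' → F} {δ : ℝ} (hδ : 0 ≤ δ)
    (hw : ∀ x ∈ Λ, ∀ y ∈ Λ, x ≠ y → 1 - δ ≤ rdist (w x) (w y)) :
    𝔼 s : Fin n → Fin n',
        ∑ x ∈ Λ, ∑ y ∈ Λ.erase x, (agr (fun j => w y (s j)) (fun j => w x (s j)) : ℝ)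
      ≤ n * δ * #Λ ^ 2 := by
  have hpair : ∀ x ∈ Λ, ∀ y ∈ Λ.erase x,
      𝔼 s : Fin n → Fin n', (agr (fun j => w y (s j)) (fun j => w x (s j)) : ℝ) ≤ n * δ := by
    intro x hx y hy
    obtain ⟨hyx, hyΛ⟩ := mem_erase.1 hy
    rw [expect_agr_comp hn']
    gcongr
    linarith [hw y hyΛ x hx hyx]
  calc _ = ∑ x ∈ Λ, ∑ y ∈ Λ.erase x,
        𝔼 s : Fin n → Fin n', (agr (fun j => w y (s j)) (fun j => w x (s j)) : ℝ) := by
        simp only [expect_sum_comm]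
    _ ≤ ∑ x ∈ Λ, ∑ y ∈ Λ.erase x, (n * δ : ℝ) :=
        sum_le_sum fun x hx => sum_le_sum (hpair x hx)
    _ ≤ ∑ x ∈ Λ, ∑ y ∈ Λ, (n * δ : ℝ) := by
        gcongr with x
        exact erase_subset x Λ
    _ = n * δ * #Λ ^ 2 := by
        simp only [sum_const, nsmul_eq_mul]
        ring

lemma sum_agr_eq_sum_card_filter (Λ : Finset ι) (w : ι → Fin n → F) (z : Fin n → F) :
    ∑ x ∈ Λ, agr (w x) z = ∑ j, #{x ∈ Λ | w x j = z j} := by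
  simp only [agr_eq_sum_ite, card_filter]
  exact sum_comm

lemma sq_sum_agr_le [DecidableEq ι] (Λ : Finset ι) (w : ι → Fin n → F) (z : Fin n → F) :
    (∑ x ∈ Λ, agr (w x) z) ^ 2
      ≤ n * (∑ x ∈ Λ, agr (w x) z + ∑ x ∈ Λ, ∑ y ∈ Λ.erase x, agr (w y) (w x)) := by
  have hpairs : ∑ x ∈ Λ, ∑ y ∈ Λ.erase x, agr (w y) (w x)
      = ∑ j, ∑ x ∈ Λ, #{y ∈ Λ.erase x | w y j = w x j} := by
    simp only [sum_agr_eq_sum_card_filter]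
    exact sum_comm
  rw [sum_agr_eq_sum_card_filter, hpairs, ← sum_add_distrib]
  calc (∑ j, #{x ∈ Λ | w x j = z j}) ^ 2 ≤ n * ∑ j, #{x ∈ Λ | w x j = z j} ^ 2 :=
        (sq_sum_le_card_mul_sum_sq (s := (univ : Finset (Fin n)))).trans_eq (by simp)
    _ ≤ _ := by
        gcongr with j
        exact card_filter_eq_sq_le Λ (fun x => w x j) (z j)

lemma sq_iSup_sum_agr_le [Fintype F] [DecidableEq ι] (Λ : Finset ι) (w : ι → Fin n → F) :
    (⨆ z : Fin n → F, ∑ x ∈ Λ, (agr (w x) z : ℝ)) ^ 2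
      ≤ n * (⨆ z : Fin n → F, ∑ x ∈ Λ, (agr (w x) z : ℝ))
        + n * ∑ x ∈ Λ, ∑ y ∈ Λ.erase x, (agr (w y) (w x) : ℝ) := by
  refine sq_ciSup_le_of_forall (by positivity) fun z => ?_
  rw [← mul_add]
  exact_mod_cast sq_sum_agr_le Λ w z

end Codes

theorem stmt_18_general
    {F : Type} [Fintype F] [DecidableEq F]
    (k n' : ℕ) (hn' : 0 < n')
    (ε : ℝ) (hε0 : 0 < ε)
    (c' : (Fin k → F) → Fin n' → F)
    (hdist : ∀ x y : Fin k → F, x ≠ y → 1 - ε ^ 2 ≤ rdist (c' x) (c' y))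
    (L : ℕ) (hL1 : 1 / ε ≤ (L : ℝ))
    (n : ℕ)
    (Λ : Finset (Fin k → F)) (hΛ : Λ.card = L) :
    ((Fintype.card (Fin n → Fin n') : ℝ))⁻¹ *
        ∑ s : Fin n → Fin n',
          (⨆ z : Fin n → F, ∑ x ∈ Λ, (agr (fun j => c' x (s j)) z : ℝ))
      ≤ 2 * n * L * ε := by
  set S : (Fin n → Fin n') → ℝ :=
    fun s => ⨆ z : Fin n → F, ∑ x ∈ Λ, (agr (fun j => c' x (s j)) z : ℝ)
  set P : (Fin n → Fin n') → ℝ := fun s =>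
    ∑ x ∈ Λ, ∑ y ∈ Λ.erase x, (agr (fun j => c' y (s j)) (fun j => c' x (s j)) : ℝ)
  have hP : 𝔼 s, P s ≤ n * ε ^ 2 * L ^ 2 :=
    hΛ ▸ expect_sum_agr_pairs_le hn' (sq_nonneg ε) fun x _ y _ hxy => hdist x y hxy
  have hLε : (n : ℝ) ≤ n * L * ε := by
    have : 1 ≤ (L : ℝ) * ε := by rwa [div_le_iff₀ hε0] at hL1
    nlinarith
  rw [inv_mul_eq_div, ← Fintype.expect_eq_sum_div_card, mul_assoc, mul_assoc, ← mul_assoc (n : ℝ)]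
  refine le_two_mul_of_sq_le_mul_add_sq (by positivity) hLε ?_
  calc (𝔼 s, S s) ^ 2 ≤ 𝔼 s, S s ^ 2 := Finset.sq_expect_le_expect_sq _ _
    _ ≤ 𝔼 s, (n * S s + n * P s) :=
        Finset.expect_le_expect fun s _ => sq_iSup_sum_agr_le Λ fun x j => c' x (s j)
    _ = n * 𝔼 s, S s + n * 𝔼 s, P s := by
        rw [Finset.expect_add_distrib, ← Finset.mul_expect, ← Finset.mul_expect]
    _ ≤ n * 𝔼 s, S s + (n * L * ε) ^ 2 := by
        have : n * 𝔼 s, P s ≤ n * (n * ε ^ 2 * L ^ 2) := by gcongr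
        linarith

/-- the bound on the quantity 𝓔 from the proof of Corollary 4.3.
A randomly sampled version of `c'` is given by a uniformly random sampling map
`s : Fin n → Fin n'`, via `x ↦ (c' x) ∘ s`; the expectation over the sampling
is the uniform average over all `s`. -/
theorem stmt_18
    {F : Type} [Field F] [Fintype F] [DecidableEq F]
    (q k n' : ℕ) (hq : q = Fintype.card F) (hk : 0 < k) (hn' : 0 < n')
    (ε : ℝ) (hε0 : 0 < ε) (hε1 : ε ≤ 1)
    (c' : (Fin k → F) → Fin n' → F) (hinj : Function.Injective c')
    (hdist : ∀ x y : Fin k → F, x ≠ y → 1 - ε ^ 2 ≤ rdist (c' x) (c' y))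
    (L : ℕ) (hL1 : 1 / ε ≤ (L : ℝ)) (hL2 : L ≤ q ^ k)
    (n : ℕ) (hn : 1 ≤ n)
    (Λ : Finset (Fin k → F)) (hΛ : Λ.card = L) :
    ((Fintype.card (Fin n → Fin n') : ℝ))⁻¹ *
        ∑ s : Fin n → Fin n',
          (⨆ z : Fin n → F, ∑ x ∈ Λ, (agr (fun j => c' x (s j)) z : ℝ))
      ≤ 2 * n * L * ε :=
  stmt_18_general k n' hn' ε hε0 c' hdist L hL1 n Λ hΛ
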